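/- arXiv:1811.10286 — 5 statements merged into one kernel-verified Lean document; each statement's English description precedes it below -/
import Mathlib

section
/- Let X be a real random variable, let (τ_k)_{k≥1} be i.i.d. nonnegative random variables with 0 < E[τ₁] < ∞ which are independent of X, set S₀ := 0 and S_n := τ₁ + ⋯ + τ_n, and let c > 0. Then for every x ∈ ℝ one has the non-asymptotic bound ∫_x^∞ P(X > u) du ≤ c·E[τ₁]·Σ_{n=0}^∞ P(X > x + c·S_n). -/
open MeasureTheory ProbabilityTheory Filter Finset Set
open scoped ENNReal

/-!
By the layer-cake formula the left-hand side is `E[(X - x)⁺]`. Since `E[τ₀] > 0`, the strong law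
makes `S_n → ∞` almost surely, so `(X - x)⁺` is covered by the increments `c τ_n` taken over those
`n` with `X > x + c S_n`. Integrating, `τ_n` is independent of `(X, S_n)`, so the `n`-th term
contributes exactly `c E[τ₀] P(X > x + c S_n)`.
-/

theorem ENNReal.ofReal_le_tsum_ite_sum_range_lt {s : ℕ → ℝ} (hs : ∀ n, 0 ≤ s n) {y : ℝ}
    (hy : ∃ n, y ≤ ∑ k ∈ range n, s k) :
    ENNReal.ofReal y ≤ ∑' n, if ∑ k ∈ range n, s k < y then ENNReal.ofReal (s n) else 0 := by
  classical
  set N := Nat.find hy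
  have hmin : ∀ k < N, ∑ j ∈ range k, s j < y := fun k hk => not_le.mp (Nat.find_min hy hk)
  calc ENNReal.ofReal y ≤ ENNReal.ofReal (∑ k ∈ range N, s k) :=
        ENNReal.ofReal_le_ofReal (Nat.find_spec hy)
    _ = ∑ k ∈ range N, ENNReal.ofReal (s k) := ENNReal.ofReal_sum_of_nonneg fun k _ => hs k
    _ = ∑ k ∈ range N, if ∑ j ∈ range k, s j < y then ENNReal.ofReal (s k) else 0 :=
        sum_congr rfl fun k hk => (if_pos (hmin k (mem_range.1 hk))).symm
    _ ≤ _ := ENNReal.sum_le_tsum _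

theorem MeasureTheory.lintegral_Ioi_measure_lt_eq_lintegral_ofReal_sub {α : Type*}
    [MeasurableSpace α] (μ : Measure α) {X : α → ℝ} (hX : AEMeasurable X μ) (x : ℝ) :
    ∫⁻ u in Ioi x, μ {ω | u < X ω} = ∫⁻ ω, ENNReal.ofReal (X ω - x) ∂μ := by
  have hshift : ∫⁻ u in Ioi x, μ {ω | u < X ω} = ∫⁻ t in Ioi 0, μ {ω | t < X ω - x} := by
    rw [← lintegral_indicator measurableSet_Ioi, ← lintegral_indicator measurableSet_Ioi,
      ← lintegral_add_right_eq_self _ x]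
    congr with t
    simp only [indicator_apply, Set.mem_Ioi, lt_add_iff_pos_left, lt_sub_iff_add_lt]
  have hlayer := lintegral_eq_lintegral_meas_lt μ (f := fun ω => max (X ω - x) 0)
    (ae_of_all _ fun ω => le_max_right _ _) ((hX.sub_const x).max aemeasurable_const)
  simp only [ENNReal.ofReal_max, ENNReal.ofReal_zero, zero_le, max_eq_left] at hlayer
  rw [hshift, hlayer]
  refine setLIntegral_congr_fun measurableSet_Ioi fun t (ht : 0 < t) => ?_
  simp only [lt_max_iff, ht.not_gt, or_false]

theorem ProbabilityTheory.setLIntegral_preimage_eq_mul_of_indepFun {Ω β : Type*}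
    [MeasurableSpace Ω] [MeasurableSpace β] {μ : Measure Ω} {f : Ω → ℝ≥0∞} {Z : Ω → β}
    (hf : Measurable f) (hZ : Measurable Z) (h : IndepFun f Z μ) {B : Set β}
    (hB : MeasurableSet B) :
    ∫⁻ ω in Z ⁻¹' B, f ω ∂μ = (∫⁻ ω, f ω ∂μ) * μ (Z ⁻¹' B) := by
  have hind : Measurable (B.indicator (1 : β → ℝ≥0∞)) := measurable_one.indicator hB
  calc ∫⁻ ω in Z ⁻¹' B, f ω ∂μ = ∫⁻ ω, (f * B.indicator (1 : β → ℝ≥0∞) ∘ Z) ω ∂μ := by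
        rw [← lintegral_indicator (hZ hB)]
        congr with ω
        by_cases hω : Z ω ∈ B <;> simp [hω]
    _ = (∫⁻ ω, f ω ∂μ) * ∫⁻ ω, B.indicator 1 (Z ω) ∂μ :=
        lintegral_mul_eq_lintegral_mul_lintegral_of_indepFun hf (hind.comp hZ)
          (h.comp measurable_id hind)
    _ = (∫⁻ ω, f ω ∂μ) * μ (Z ⁻¹' B) := by
        rw [← lintegral_indicator_one (hZ hB)]
        rfl

instance Prod.instMeasurableAdd₂ {M N : Type*} [MeasurableSpace M] [MeasurableSpace N] [Add M]
    [Add N] [MeasurableAdd₂ M] [MeasurableAdd₂ N] : MeasurableAdd₂ (M × N) :=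
  ⟨(measurable_fst.fst.add measurable_snd.fst).prodMk (measurable_fst.snd.add measurable_snd.snd)⟩

theorem ProbabilityTheory.iIndepFun.indepFun_prodMk_sum_range {Ω β : Type*} [MeasurableSpace Ω]
    {μ : Measure Ω} [MeasurableSpace β] [AddCommMonoid β] [MeasurableAdd₂ β]
    {X : Ω → β} {τ : ℕ → Ω → β} (hX : Measurable X) (hτ : ∀ k, Measurable (τ k))
    (hindep : iIndepFun (fun i => Option.elim i X τ) μ) (n : ℕ) :
    IndepFun (τ n) (fun ω => (X ω, ∑ k ∈ range n, τ k ω)) μ := by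
  -- embed `X` and the `τ k` into the two coordinates of `β × β`, where `(X, S n)` becomes a sum
  set g : Option ℕ → β → β × β := fun i => Option.elim i (fun b => (b, 0)) fun _ b => (0, b)
  have hg : ∀ i, Measurable (g i) := by
    rintro (_ | _)
    exacts [measurable_id.prodMk measurable_const, measurable_const.prodMk measurable_id]
  have hmeas : ∀ i, Measurable (Option.elim i X τ) := by rintro (_ | k); exacts [hX, hτ k]
  have key := (hindep.comp g hg).indepFun_finsetSum_of_notMem (fun i => (hg i).comp (hmeas i))
    (s := insert none ((range n).map Function.Embedding.some)) (i := some n) (by simp)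
  convert key.symm.comp measurable_snd measurable_id using 1
  · rfl
  · ext ω <;> simp [g, Prod.fst_sum, Prod.snd_sum]

theorem ProbabilityTheory.ae_tendsto_sum_range_atTop {Ω : Type*} [MeasurableSpace Ω]
    {μ : Measure Ω} {τ : ℕ → Ω → ℝ} (hint : Integrable (τ 0) μ)
    (hindep : Pairwise (Function.onFun (IndepFun · · μ) τ))
    (hident : ∀ k, IdentDistrib (τ k) (τ 0) μ μ) (hmean : 0 < μ[τ 0]) :
    ∀ᵐ ω ∂μ, Tendsto (fun n => ∑ k ∈ range n, τ k ω) atTop atTop := by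
  filter_upwards [strong_law_ae τ hint hindep hident] with ω hω
  refine (hω.pos_mul_atTop hmean tendsto_natCast_atTop_atTop).congr' ?_
  filter_upwards [eventually_ne_atTop 0] with n hn
  simp only [smul_eq_mul]
  field_simp

theorem MeasureTheory.lintegral_ofReal_sub_le_tsum_setLIntegral {Ω : Type*} [MeasurableSpace Ω]
    {μ : Measure Ω} {X : Ω → ℝ} {s : ℕ → Ω → ℝ} (hX : Measurable X) (hs : ∀ n, Measurable (s n))
    (hs_nonneg : ∀ n ω, 0 ≤ s n ω)
    (hdiv : ∀ᵐ ω ∂μ, Tendsto (fun n => ∑ k ∈ range n, s k ω) atTop atTop) (x : ℝ) :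
    ∫⁻ ω, ENNReal.ofReal (X ω - x) ∂μ ≤
      ∑' n, ∫⁻ ω in {ω | x + ∑ k ∈ range n, s k ω < X ω}, ENNReal.ofReal (s n ω) ∂μ := by
  have hA : ∀ n, MeasurableSet {ω | x + ∑ k ∈ range n, s k ω < X ω} :=
    fun n => measurableSet_lt (by fun_prop) hX
  calc ∫⁻ ω, ENNReal.ofReal (X ω - x) ∂μ
      ≤ ∫⁻ ω, ∑' n, {ω | x + ∑ k ∈ range n, s k ω < X ω}.indicator
          (fun ω => ENNReal.ofReal (s n ω)) ω ∂μ := by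
        refine lintegral_mono_ae ?_
        filter_upwards [hdiv] with ω hω
        refine (ENNReal.ofReal_le_tsum_ite_sum_range_lt (fun n => hs_nonneg n ω)
          (hω.eventually_ge_atTop _).exists).trans_eq (tsum_congr fun n => ?_)
        simp [indicator_apply, lt_sub_iff_add_lt']
    _ = _ := by
        rw [lintegral_tsum fun n => ((hs n).ennreal_ofReal.indicator (hA n)).aemeasurable]
        exact tsum_congr fun n => lintegral_indicator (hA n) _

theorem integrated_tail_le_series_general
    {Ω : Type*} [MeasurableSpace Ω] (μ : Measure Ω)
    (X : Ω → ℝ) (τ : ℕ → Ω → ℝ) (c : ℝ) (hc : 0 < c)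
    (hX : Measurable X) (hτ : ∀ k, Measurable (τ k))
    (hτnonneg : ∀ k ω, 0 ≤ τ k ω)
    (hint : Integrable (τ 0) μ) (hmean : 0 < ∫ ω, τ 0 ω ∂μ)
    (hident : ∀ k, IdentDistrib (τ k) (τ 0) μ μ)
    (hindep : iIndepFun
      (fun i => Option.elim i X τ) μ) :
    ∀ x : ℝ,
      (∫⁻ u in Set.Ioi x, μ {ω | X ω > u}) ≤
        ENNReal.ofReal (c * ∫ ω, τ 0 ω ∂μ) *
          ∑' n : ℕ, μ {ω | X ω > x + c * ∑ k ∈ Finset.range n, τ k ω} := by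
  intro x
  set Z : ℕ → Ω → ℝ × ℝ := fun n ω => (X ω, ∑ k ∈ range n, τ k ω)
  set B : Set (ℝ × ℝ) := {p | x + c * p.2 < p.1}
  have hdiv : ∀ᵐ ω ∂μ, Tendsto (fun n => ∑ k ∈ range n, c * τ k ω) atTop atTop := by
    filter_upwards [ae_tendsto_sum_range_atTop hint
      (fun i j hij => hindep.indepFun (i := some i) (j := some j) (by simpa using hij))
      hident hmean] with ω hω
    simpa only [← mul_sum] using hω.const_mul_atTop hc
  have hterm : ∀ n, ∫⁻ ω in Z n ⁻¹' B, ENNReal.ofReal (c * τ n ω) ∂μ =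
      ENNReal.ofReal (c * μ[τ 0]) * μ (Z n ⁻¹' B) := fun n => by
    have hind : IndepFun (fun ω => ENNReal.ofReal (c * τ n ω)) (Z n) μ :=
      (hindep.indepFun_prodMk_sum_range hX hτ n).comp
        (by fun_prop : Measurable fun t : ℝ => ENNReal.ofReal (c * t)) measurable_id
    have hlintegral : ∫⁻ ω, ENNReal.ofReal (c * τ n ω) ∂μ = ENNReal.ofReal (c * μ[τ 0]) := by
      rw [← (hident n).integral_eq, ← integral_const_mul, ofReal_integral_eq_lintegral_ofReal
        (((hident n).integrable_iff.2 hint).const_mul c)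
        (ae_of_all _ fun ω => mul_nonneg hc.le (hτnonneg n ω))]
    rw [setLIntegral_preimage_eq_mul_of_indepFun (by fun_prop) (by fun_prop) hind
      (measurableSet_lt (by fun_prop) measurable_fst), hlintegral]
  calc (∫⁻ u in Ioi x, μ {ω | X ω > u}) = ∫⁻ ω, ENNReal.ofReal (X ω - x) ∂μ :=
        lintegral_Ioi_measure_lt_eq_lintegral_ofReal_sub μ hX.aemeasurable x
    _ ≤ ∑' n, ∫⁻ ω in Z n ⁻¹' B, ENNReal.ofReal (c * τ n ω) ∂μ := by
        have h := lintegral_ofReal_sub_le_tsum_setLIntegral hX (fun k => (hτ k).const_mul c)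
          (fun k ω => mul_nonneg hc.le (hτnonneg k ω)) hdiv x
        simp only [← mul_sum] at h
        exact h
    _ = ENNReal.ofReal (c * μ[τ 0]) * ∑' n, μ (Z n ⁻¹' B) := by
        simp_rw [hterm, ENNReal.tsum_mul_left]

/-- **Upper-bound half of Lemma 4.2.** For any real random variable `X`,
i.i.d. nonnegative `(τ k)` with positive finite mean, independent of `X`,
partial sums `S n = τ 0 + ⋯ + τ (n-1)` and `c > 0`, for every `x`:
`∫_x^∞ P(X > u) du ≤ c · E[τ 0] · ∑_{n≥0} P(X > x + c S_n)`. -/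
theorem integrated_tail_le_series
    {Ω : Type*} [MeasurableSpace Ω] (μ : Measure Ω) [IsProbabilityMeasure μ]
    (X : Ω → ℝ) (τ : ℕ → Ω → ℝ) (c : ℝ) (hc : 0 < c)
    (hX : Measurable X) (hτ : ∀ k, Measurable (τ k))
    (hτnonneg : ∀ k ω, 0 ≤ τ k ω)
    (hint : Integrable (τ 0) μ) (hmean : 0 < ∫ ω, τ 0 ω ∂μ)
    (hident : ∀ k, IdentDistrib (τ k) (τ 0) μ μ)
    (hindep : iIndepFun
      (fun i => Option.elim i X τ) μ) :
    ∀ x : ℝ,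
      (∫⁻ u in Set.Ioi x, μ {ω | X ω > u}) ≤
        ENNReal.ofReal (c * ∫ ω, τ 0 ω ∂μ) *
          ∑' n : ℕ, μ {ω | X ω > x + c * ∑ k ∈ Finset.range n, τ k ω} :=
  integrated_tail_le_series_general μ X τ c hc hX hτ hτnonneg hint hmean hident hindep
end

section
/- Let Z be a real-valued random variable and let F : ℝ → [0,1] be nonincreasing and left-continuous with lim_{x→−∞} F(x) = 1 and lim_{x→+∞} F(x) = 0 (so that 1 − F is the distribution function of some real random variable, with F(x) = P(·≥x)). Assume P(Z ≥ x) ≤ F(x) for all x ∈ ℝ. Let V be uniformly distributed on [0,1] and independent of Z. Then there exists a Borel measurable function g : ℝ × [0,1] → ℝ such that the random variable X := g(Z, V) satisfies Z ≤ X almost surely and P(X ≥ x) = F(x) for every x ∈ ℝ. -/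
/-!
Let `ν` be the law of `Z`, `G z = ν [z, ∞)` and `H z = ν (z, ∞)`. The distributional transform
`W = H Z + V ν {Z}` is uniform on `[0, 1]`: for `t ∈ (0, 1)` and `c = G⁻¹ t`, the event `W < t`
is `Z > c` together with the part `V < (t - H c) / ν {c}` of the atom at `c`, of total mass
`H c + (t - H c) = t`. Moreover `W ≤ G Z ≤ F Z`. For the generalized inverse
`F⁻¹ u = sup {y | u ≤ F y}`, left continuity of `F` gives `x ≤ F⁻¹ u ↔ u ≤ F x` on `(0, 1)`, so
`X = F⁻¹ W` satisfies `Z ≤ X` and `P(X ≥ x) = P(W ≤ F x) = F x`.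
-/

open MeasureTheory ProbabilityTheory Filter Set Topology

noncomputable def quantile (F : ℝ → ℝ) : ℝ → ℝ :=
  (Ioo 0 1).indicator fun u => sSup {y | u ≤ F y}

section Quantile

variable {F : ℝ → ℝ} (hFanti : Antitone F) (hFleft : ∀ x, ContinuousWithinAt F (Iio x) x)
  (hFbot : Tendsto F atBot (𝓝 1)) (hFtop : Tendsto F atTop (𝓝 0))
include hFanti hFleft hFbot hFtop

theorem le_quantile_iff {u : ℝ} (hu : u ∈ Ioo 0 1) (x : ℝ) : x ≤ quantile F u ↔ u ≤ F x := by
  have hne : {y | u ≤ F y}.Nonempty :=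
    ((hFbot.eventually (eventually_gt_nhds hu.2)).exists).imp fun _ hy => hy.le
  have hbdd : BddAbove {y | u ≤ F y} := by
    obtain ⟨b, hb⟩ := eventually_atTop.1 (hFtop.eventually (eventually_lt_nhds hu.1))
    exact ⟨b, fun y hy => not_lt.1 fun hby => (hb y hby.le).not_ge hy⟩
  rw [quantile, indicator_of_mem hu]
  refine ⟨fun hx => ge_of_tendsto (hFleft x) ?_, fun hx => le_csSup hbdd hx⟩
  filter_upwards [self_mem_nhdsWithin] with y hy
  obtain ⟨s, hs, hys⟩ := exists_lt_of_lt_csSup hne (hy.trans_le hx)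
  exact hs.trans (hFanti hys.le)

theorem antitoneOn_quantile : AntitoneOn (quantile F) (Ioo 0 1) := fun u hu u' hu' huu' => by
  rw [le_quantile_iff hFanti hFleft hFbot hFtop hu]
  exact huu'.trans ((le_quantile_iff hFanti hFleft hFbot hFtop hu' _).1 le_rfl)

theorem measurable_quantile : Measurable (quantile F) := by
  refine measurable_of_restrict_of_restrict_compl (measurableSet_Ioo (a := (0 : ℝ)) (b := 1)) ?_ ?_
  · exact Antitone.measurable fun u u' h => antitoneOn_quantile hFanti hFleft hFbot hFtop u.2 u'.2 h
  · convert measurable_const (a := (0 : ℝ)) with u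
    exact indicator_of_notMem u.2 (fun u => sSup {y | u ≤ F y})

end Quantile

instance : IsProbabilityMeasure (volume.restrict (Icc (0 : ℝ) 1)) := ⟨by simp⟩

theorem volume_restrict_Icc_Iic {a : ℝ} (ha : a ≤ 1) :
    volume.restrict (Icc (0 : ℝ) 1) (Iic a) = ENNReal.ofReal a := by
  have hset : Iic a ∩ Icc 0 1 = Icc 0 a := by
    ext v
    simp only [mem_inter_iff, mem_Iic, mem_Icc]
    grind
  rw [Measure.restrict_apply measurableSet_Iic, hset, Real.volume_Icc, sub_zero]

theorem ae_mem_Ioo_of_map_eq_volume_restrict_Icc {Ω : Type*} [MeasurableSpace Ω] {μ : Measure Ω}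
    {W : Ω → ℝ} (hW : AEMeasurable W μ) (hlaw : μ.map W = volume.restrict (Icc 0 1)) :
    ∀ᵐ ω ∂μ, W ω ∈ Ioo 0 1 := by
  refine ae_of_ae_map hW ?_
  rw [hlaw, ← Measure.restrict_congr_set Ioo_ae_eq_Icc]
  exact ae_restrict_mem measurableSet_Ioo

theorem measure_Iio_eq_ofReal_min {ρ : Measure ℝ} [IsProbabilityMeasure ρ]
    (h : ∀ t ∈ Ioo (0 : ℝ) 1, ρ (Iio t) = ENNReal.ofReal t) (t : ℝ) :
    ρ (Iio t) = ENNReal.ofReal (min t 1) := by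
  have hofReal (a : ℝ) (l : Filter ℝ) (hl : l ≤ 𝓝 a) :
      Tendsto ENNReal.ofReal l (𝓝 (ENNReal.ofReal a)) :=
    (ENNReal.continuous_ofReal.tendsto a).mono_left hl
  rcases le_or_gt t 0 with ht0 | ht0
  · rw [min_eq_left (ht0.trans zero_le_one), ENNReal.ofReal_of_nonpos ht0]
    refine le_antisymm ?_ zero_le
    refine ENNReal.ofReal_zero ▸ ge_of_tendsto (hofReal 0 (𝓝[>] 0) nhdsWithin_le_nhds) ?_
    filter_upwards [Ioo_mem_nhdsGT zero_lt_one] with s hs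
    exact (h s hs).symm ▸ measure_mono (Iio_subset_Iio (ht0.trans hs.1.le))
  rcases lt_or_ge t 1 with ht1 | ht1
  · rw [min_eq_left ht1.le, h t ⟨ht0, ht1⟩]
  rw [min_eq_right ht1]
  refine le_antisymm (by simpa using prob_le_one) ?_
  refine le_of_tendsto (hofReal 1 (𝓝[<] 1) nhdsWithin_le_nhds) ?_
  filter_upwards [Ioo_mem_nhdsLT zero_lt_one] with s hs
  exact (h s hs) ▸ measure_mono (Iio_subset_Iio (hs.2.le.trans ht1))

theorem eq_volume_restrict_Icc_of_measure_Iio {ρ : Measure ℝ} [IsProbabilityMeasure ρ]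
    (h : ∀ t ∈ Ioo (0 : ℝ) 1, ρ (Iio t) = ENNReal.ofReal t) : ρ = volume.restrict (Icc 0 1) := by
  have hunif (t : ℝ) (ht : t ∈ Ioo (0 : ℝ) 1) :
      volume.restrict (Icc (0 : ℝ) 1) (Iio t) = ENNReal.ofReal t := by
    rw [measure_congr Iio_ae_eq_Iic, volume_restrict_Icc_Iic ht.2.le]
  refine ext_of_generate_finite (range Iio)
    (BorelSpace.measurable_eq.trans (borel_eq_generateFrom_Iio ℝ)) isPiSystem_Iio ?_ (by simp)
  rintro _ ⟨t, rfl⟩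
  rw [measure_Iio_eq_ofReal_min h, measure_Iio_eq_ofReal_min hunif]

theorem measure_le_quantile_comp {Ω : Type*} [MeasurableSpace Ω] {μ : Measure Ω} {F : ℝ → ℝ}
    (hFanti : Antitone F) (hFleft : ∀ x, ContinuousWithinAt F (Iio x) x)
    (hFbot : Tendsto F atBot (𝓝 1)) (hFtop : Tendsto F atTop (𝓝 0)) {W : Ω → ℝ}
    (hW : Measurable W) (hlaw : μ.map W = volume.restrict (Icc 0 1)) {x : ℝ} (hx : F x ≤ 1) :
    μ {ω | x ≤ quantile F (W ω)} = ENNReal.ofReal (F x) := by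
  have hset : {ω | x ≤ quantile F (W ω)} =ᵐ[μ] W ⁻¹' Iic (F x) := by
    filter_upwards [ae_mem_Ioo_of_map_eq_volume_restrict_Icc hW.aemeasurable hlaw] with ω hω
    exact propext (le_quantile_iff hFanti hFleft hFbot hFtop hω x)
  rw [measure_congr hset, ← Measure.map_apply hW measurableSet_Iic, hlaw,
    volume_restrict_Icc_Iic hx]

section Survival

variable (ν : Measure ℝ) [IsFiniteMeasure ν]

theorem tendsto_measure_Ici_nhdsLT (x : ℝ) :
    Tendsto (fun y => ν (Ici y)) (𝓝[<] x) (𝓝 (ν (Ici x))) := by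
  have h := tendsto_measure_biInter_gt (ι := ℝᵒᵈ) (μ := ν) (s := fun r => Ici (OrderDual.ofDual r))
    (a := OrderDual.toDual x) (fun _ _ => measurableSet_Ici.nullMeasurableSet)
    (fun _ _ _ hij => Ici_subset_Ici.2 hij)
    ⟨OrderDual.toDual (x - 1), show x - 1 < x by linarith, measure_ne_top _ _⟩
  have hI : ⋂ r > OrderDual.toDual x, Ici (OrderDual.ofDual r) = Ici x := by
    ext y
    simpa using forall_lt_imp_le_iff_le_of_dense
  rwa [hI] at h

theorem tendsto_measure_Iio_nhdsGT (x : ℝ) :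
    Tendsto (fun y => ν (Iio y)) (𝓝[>] x) (𝓝 (ν (Iic x))) := by
  have h := tendsto_measure_biInter_gt (μ := ν) (s := Iio) (a := x)
    (fun _ _ => measurableSet_Iio.nullMeasurableSet)
    (fun _ _ _ hij => Iio_subset_Iio hij) ⟨x + 1, by simp, measure_ne_top _ _⟩
  have hI : ⋂ r > x, Iio r = Iic x := by
    ext y
    simpa using forall_gt_iff_le
  rwa [hI] at h

theorem antitone_measureReal_Ici : Antitone fun x => ν.real (Ici x) :=
  fun _ _ h => measureReal_mono (Ici_subset_Ici.2 h)

theorem antitone_measureReal_Ioi : Antitone fun x => ν.real (Ioi x) :=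
  fun _ _ h => measureReal_mono (Ioi_subset_Ioi h)

theorem continuousWithinAt_measureReal_Ici (x : ℝ) :
    ContinuousWithinAt (fun y => ν.real (Ici y)) (Iio x) x :=
  (ENNReal.tendsto_toReal (measure_ne_top _ _)).comp (tendsto_measure_Ici_nhdsLT ν x)

theorem tendsto_measureReal_Ici_nhdsGT (x : ℝ) :
    Tendsto (fun y => ν.real (Ici y)) (𝓝[>] x) (𝓝 (ν.real (Ioi x))) := by
  have h := tendsto_const_nhds (x := ν.real univ) |>.sub
    ((ENNReal.tendsto_toReal (measure_ne_top _ _)).comp (tendsto_measure_Iio_nhdsGT ν x))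
  simpa only [Function.comp_def, ← measureReal_def, ← compl_Iio, ← compl_Iic,
    measureReal_compl measurableSet_Iio, measureReal_compl measurableSet_Iic] using h

theorem tendsto_measureReal_Ici_atBot :
    Tendsto (fun x => ν.real (Ici x)) atBot (𝓝 (ν.real univ)) :=
  (ENNReal.tendsto_toReal (measure_ne_top _ _)).comp (tendsto_measure_Ici_atBot ν)

theorem tendsto_measureReal_Ici_atTop : Tendsto (fun x => ν.real (Ici x)) atTop (𝓝 0) := by
  have h := tendsto_measure_iInter_atTop (μ := ν) (fun _ => measurableSet_Ici.nullMeasurableSet)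
    (fun _ _ h => Ici_subset_Ici.2 h) ⟨0, measure_ne_top ν (Ici 0)⟩
  have hI : ⋂ x : ℝ, Ici x = ∅ :=
    eq_empty_of_forall_notMem fun y hy => (lt_add_one y).not_ge (mem_iInter.1 hy (y + 1))
  rw [hI, measure_empty] at h
  exact (ENNReal.tendsto_toReal ENNReal.zero_ne_top).comp h

theorem measureReal_Ici_eq_add (x : ℝ) : ν.real (Ici x) = ν.real (Ioi x) + ν.real {x} := by
  rw [← Ioi_union_left, measureReal_union (disjoint_singleton_right.2 self_notMem_Ioi)
    (measurableSet_singleton x)]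

end Survival

theorem volume_restrict_Icc_setOf_add_mul_lt {h a t : ℝ} (hht : h ≤ t) (hta : t ≤ h + a) :
    volume.restrict (Icc (0 : ℝ) 1) {v | h + v * a < t} = ENNReal.ofReal ((t - h) / a) := by
  -- for `a = 0` both sides vanish, the right one through `x / 0 = 0`
  rcases (show 0 ≤ a by linarith).eq_or_lt with rfl | ha
  · simp [le_antisymm (by simpa using hta) hht]
  have hset : {v | h + v * a < t} ∩ Icc 0 1 = Ico 0 ((t - h) / a) := by
    ext v
    simp only [mem_inter_iff, mem_ofPred_eq, mem_Icc, mem_Ico, lt_div_iff₀ ha]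
    exact ⟨fun ⟨hv, hv0, _⟩ => ⟨hv0, by linarith⟩,
      fun ⟨hv0, hv⟩ => ⟨by linarith, hv0, by nlinarith⟩⟩
  rw [Measure.restrict_apply' measurableSet_Icc, hset, Real.volume_Ico, sub_zero]

noncomputable def distribTransform (ν : Measure ℝ) (p : ℝ × ℝ) : ℝ :=
  ν.real (Ioi p.1) + p.2 * ν.real {p.1}

section DistribTransform

variable (ν : Measure ℝ)

theorem measurable_distribTransform [IsFiniteMeasure ν] : Measurable (distribTransform ν) := by
  have hH : Measurable fun z => ν.real (Ioi z) := (antitone_measureReal_Ioi ν).measurable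
  have hatom : Measurable fun z => ν.real {z} := by
    simp_rw [eq_sub_of_add_eq' (measureReal_Ici_eq_add ν _).symm]
    exact (antitone_measureReal_Ici ν).measurable.sub hH
  exact (hH.comp measurable_fst).add (measurable_snd.mul (hatom.comp measurable_fst))

theorem measureReal_Ioi_le_distribTransform {z v : ℝ} (hv : 0 ≤ v) :
    ν.real (Ioi z) ≤ distribTransform ν (z, v) :=
  le_add_of_nonneg_right (mul_nonneg hv measureReal_nonneg)

theorem distribTransform_le_measureReal_Ici [IsFiniteMeasure ν] {z v : ℝ} (hv : v ≤ 1) :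
    distribTransform ν (z, v) ≤ ν.real (Ici z) := by
  rw [measureReal_Ici_eq_add, distribTransform]
  gcongr
  exact mul_le_of_le_one_left measureReal_nonneg hv

end DistribTransform

theorem volume_restrict_Icc_setOf_distribTransform_lt (ν : Measure ℝ) [IsFiniteMeasure ν]
    {t c : ℝ} (hc : ∀ z, z ≤ c ↔ t ≤ ν.real (Ici z)) (hHc : ν.real (Ioi c) ≤ t) (z : ℝ) :
    volume.restrict (Icc 0 1) {v | distribTransform ν (z, v) < t} = (Ioi c).indicator 1 z +
      ({c} : Set ℝ).indicator (fun _ => ENNReal.ofReal ((t - ν.real (Ioi c)) / ν.real {c})) z := by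
  have hGc : t ≤ ν.real (Ici c) := (hc c).1 le_rfl
  rcases lt_trichotomy z c with hz | rfl | hz
  · have hHz : t ≤ ν.real (Ioi z) := hGc.trans (measureReal_mono (Ici_subset_Ioi.2 hz))
    rw [indicator_of_notMem (notMem_Ioi.2 hz.le),
      indicator_of_notMem (notMem_singleton_iff.2 hz.ne), add_zero,
      Measure.restrict_apply' measurableSet_Icc]
    convert measure_empty (μ := volume)
    refine eq_empty_of_forall_notMem fun v ⟨hv, hv0, _⟩ => ?_
    exact (hHz.trans (measureReal_Ioi_le_distribTransform ν hv0)).not_gt hv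
  · rw [indicator_of_notMem self_notMem_Ioi, indicator_of_mem (mem_singleton z), zero_add]
    exact volume_restrict_Icc_setOf_add_mul_lt hHc (measureReal_Ici_eq_add ν z ▸ hGc)
  · have hGz : ν.real (Ici z) < t := not_le.1 fun h => not_le.2 hz ((hc z).2 h)
    have hsub : Icc 0 1 ⊆ {v | distribTransform ν (z, v) < t} := fun v hv =>
      (distribTransform_le_measureReal_Ici ν hv.2).trans_lt hGz
    rw [indicator_of_mem (mem_Ioi.2 hz), indicator_of_notMem (notMem_singleton_iff.2 hz.ne'),
      add_zero, Pi.one_apply, Measure.restrict_apply_superset hsub]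
    simp

theorem prod_preimage_distribTransform_Iio (ν : Measure ℝ) [IsProbabilityMeasure ν] {t : ℝ}
    (ht : t ∈ Ioo 0 1) :
    (ν.prod (volume.restrict (Icc 0 1))) (distribTransform ν ⁻¹' Iio t) = ENNReal.ofReal t := by
  set c := quantile (fun z => ν.real (Ici z)) t
  have hc (z : ℝ) : z ≤ c ↔ t ≤ ν.real (Ici z) :=
    le_quantile_iff (antitone_measureReal_Ici ν) (continuousWithinAt_measureReal_Ici ν)
      (by simpa using tendsto_measureReal_Ici_atBot ν) (tendsto_measureReal_Ici_atTop ν) ht z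
  have hHc : ν.real (Ioi c) ≤ t :=
    le_of_tendsto (tendsto_measureReal_Ici_nhdsGT ν c) <| eventually_nhdsWithin_of_forall
      fun z hz => (not_le.1 fun h => not_le.2 hz ((hc z).2 h)).le
  have hatom : t ≤ ν.real (Ioi c) + ν.real {c} := measureReal_Ici_eq_add ν c ▸ (hc c).1 le_rfl
  rw [Measure.prod_apply (measurable_distribTransform ν measurableSet_Iio)]
  refine (lintegral_congr (volume_restrict_Icc_setOf_distribTransform_lt ν hc hHc)).trans ?_
  rw [lintegral_add_left (measurable_one.indicator measurableSet_Ioi),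
    lintegral_indicator_one measurableSet_Ioi,
    lintegral_indicator_const (measurableSet_singleton c), ← ofReal_measureReal,
    ← ofReal_measureReal, ← ENNReal.ofReal_mul (div_nonneg (by linarith) measureReal_nonneg),
    ← ENNReal.ofReal_add measureReal_nonneg (by positivity)]
  congr 1
  rcases eq_or_ne (ν.real {c}) 0 with ha | ha
  · rw [ha, add_zero] at hatom
    rw [ha, mul_zero, add_zero]
    linarith
  · rw [div_mul_cancel₀ _ ha]
    ring

theorem map_distribTransform_prod (ν : Measure ℝ) [IsProbabilityMeasure ν] :
    (ν.prod (volume.restrict (Icc 0 1))).map (distribTransform ν) = volume.restrict (Icc 0 1) := by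
  have := Measure.isProbabilityMeasure_map (μ := ν.prod (volume.restrict (Icc (0 : ℝ) 1)))
    (measurable_distribTransform ν).aemeasurable
  refine eq_volume_restrict_Icc_of_measure_Iio fun t ht => ?_
  rw [Measure.map_apply (measurable_distribTransform ν) measurableSet_Iio]
  exact prod_preimage_distribTransform_Iio ν ht

theorem map_distribTransform_comp {Ω : Type*} [MeasurableSpace Ω] {μ : Measure Ω}
    [IsProbabilityMeasure μ] {Z V : Ω → ℝ} (hZ : Measurable Z) (hV : Measurable V)
    (hVunif : μ.map V = volume.restrict (Icc 0 1)) (hindep : IndepFun Z V μ) :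
    μ.map (fun ω => distribTransform (μ.map Z) (Z ω, V ω)) = volume.restrict (Icc 0 1) := by
  have := Measure.isProbabilityMeasure_map (μ := μ) hZ.aemeasurable
  have hjoint : μ.map (fun ω => (Z ω, V ω)) = (μ.map Z).prod (volume.restrict (Icc 0 1)) :=
    hVunif ▸ (indepFun_iff_map_prod_eq_prod_map_map hZ.aemeasurable hV.aemeasurable).1 hindep
  rw [← map_distribTransform_prod (μ.map Z), ← hjoint,
    Measure.map_map (measurable_distribTransform _) (hZ.prodMk hV)]
  rfl

/-- **Lemma 4.9 (tailBound).** If the upper tail of `Z` is dominated by a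
survival function `F` (nonincreasing, left-continuous, `F → 1` at `-∞` and
`F → 0` at `+∞`, taking values in `[0,1]`), and `V` is uniform on `[0,1]`
independent of `Z`, then there is a measurable function `g` of `(Z, V)` whose
value dominates `Z` a.s. and whose survival function is exactly `F`. -/
theorem exists_dominating_with_survival_function
    {Ω : Type*} [MeasurableSpace Ω] (μ : Measure Ω) [IsProbabilityMeasure μ]
    (Z V : Ω → ℝ) (hZ : Measurable Z) (hV : Measurable V)
    (hVunif : Measure.map V μ = volume.restrict (Set.Icc (0:ℝ) 1))
    (hindep : IndepFun Z V μ)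
    (F : ℝ → ℝ) (hF01 : ∀ x, F x ∈ Set.Icc (0:ℝ) 1)
    (hFanti : Antitone F)
    (hFleft : ∀ x, ContinuousWithinAt F (Set.Iio x) x)
    (hFbot : Tendsto F atBot (nhds 1)) (hFtop : Tendsto F atTop (nhds 0))
    (hdom : ∀ x : ℝ, (μ {ω | x ≤ Z ω}).toReal ≤ F x) :
    ∃ g : ℝ × ℝ → ℝ, Measurable g ∧
      (∀ᵐ ω ∂μ, Z ω ≤ g (Z ω, V ω)) ∧
      ∀ x : ℝ, (μ {ω | x ≤ g (Z ω, V ω)}).toReal = F x := by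
  set ν := μ.map Z
  set W : Ω → ℝ := fun ω => distribTransform ν (Z ω, V ω)
  have hWmeas : Measurable W := (measurable_distribTransform ν).comp (hZ.prodMk hV)
  have hlaw : μ.map W = volume.restrict (Icc 0 1) := map_distribTransform_comp hZ hV hVunif hindep
  have hWdom : ∀ᵐ ω ∂μ, W ω ≤ F (Z ω) := by
    filter_upwards [ae_of_ae_map hV.aemeasurable (hVunif ▸ ae_restrict_mem measurableSet_Icc)]
      with ω hω
    refine (distribTransform_le_measureReal_Ici ν hω.2).trans ?_
    rw [map_measureReal_apply hZ measurableSet_Ici]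
    exact hdom (Z ω)
  refine ⟨fun p => quantile F (distribTransform ν p),
    (measurable_quantile hFanti hFleft hFbot hFtop).comp (measurable_distribTransform ν), ?_,
    fun x => ?_⟩
  · filter_upwards [ae_mem_Ioo_of_map_eq_volume_restrict_Icc hWmeas.aemeasurable hlaw, hWdom]
      with ω h01 hle using (le_quantile_iff hFanti hFleft hFbot hFtop h01 _).2 hle
  · rw [measure_le_quantile_comp hFanti hFleft hFbot hFtop hWmeas hlaw (hF01 x).2,
      ENNReal.toReal_ofReal (hF01 x).1]
end

section
/- Let (X_k)_{k≥1} be i.i.d. real random variables, set S₀ := 0 and S_n := X₁ + ⋯ + X_n dla n ≥ 1. Let τ be a geometric random variable with P(τ = n) = p(1−p)^{n−1} for n ≥ 1 (where 0 < p < 1), independent of (X_k)_{k≥1}. Then for all real numbers u and u₀ with 0 < u₀ < u one has P( max_{0 ≤ k < τ} S_k > u ) · P( S_τ ≥ −u₀ ) ≤ P( S_τ ≥ u − u₀ ). In particular, if P(S_τ ≥ −u₀) > 0 then P( max_{0 ≤ k < τ} S_k > u ) ≤ P( S_τ ≥ u − u₀ ) / P( S_τ ≥ −u₀ ). -/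
/-!
Split the event `max_{k < τ} S_k > u` according to the first passage time `k` of `S` above `u`.
The first passage event at `k` depends only on `X_0, …, X_{k-1}`, so it is independent of the
increment `S_{k+n+1} - S_k`, which is distributed as `S_{n+1}`; and by memorylessness
`P(τ > k) P(τ = n + 1) = P(τ = k + n + 1)`. Hence `P(max_{k < τ} S_k > u) P(S_τ ≥ -u₀)` is the sum
over `k, n` of the probabilities of the disjoint events "first passage at `k`,
`S_{k+n+1} - S_k ≥ -u₀`, `τ = k + n + 1`", each of which forces `S_τ ≥ u - u₀`.
-/

open MeasureTheory ProbabilityTheory Finset Function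
open scoped ENNReal

theorem ENNReal.tsum_mul_tsum_eq_tsum_sum_antidiagonal (f g : ℕ → ℝ≥0∞) :
    (∑' n, f n) * ∑' n, g n = ∑' n, ∑ kl ∈ antidiagonal n, f kl.1 * g kl.2 := by
  rw [← ENNReal.tsum_mul_right]
  simp_rw [← ENNReal.tsum_mul_left]
  rw [← ENNReal.tsum_prod (f := fun k l => f k * g l),
    ← HasAntidiagonal.sigmaAntidiagonalEquivProd.tsum_eq, ENNReal.tsum_sigma']
  congr 1 with n
  exact Finset.tsum_subtype (antidiagonal n) fun kl => f kl.1 * g kl.2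

theorem ENNReal.tsum_mul_tsum_eq_tsum_mul_sum_range {a t g d : ℕ → ℝ≥0∞} (hg0 : g 0 = 0)
    (hg : ∀ k m, g (k + m + 1) = t k * g (m + 1)) :
    (∑' k, a k * t k) * ∑' n, g n * d n = ∑' n, g n * ∑ k ∈ range n, a k * d (n - k) := by
  rw [ENNReal.tsum_mul_tsum_eq_tsum_sum_antidiagonal]
  congr 1 with n
  rw [Nat.sum_antidiagonal_eq_sum_range_succ_mk, sum_range_succ, Nat.sub_self, hg0, zero_mul,
    mul_zero, add_zero, mul_sum]
  refine sum_congr rfl fun k hk => ?_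
  obtain ⟨m, rfl⟩ := Nat.exists_eq_add_of_lt (mem_range.1 hk)
  rw [show k + m + 1 - k = m + 1 by omega, hg]
  ring

section GeometricTime

variable {Ω : Type*} [MeasurableSpace Ω] {μ : Measure Ω} {τ : Ω → ℕ} {p : ℝ}

theorem measure_lt_of_geometric (hτ : Measurable τ) (hp : 0 < p) (hp1 : p < 1)
    (hgeom : ∀ n : ℕ, μ {ω | τ ω = n + 1} = ENNReal.ofReal (p * (1 - p) ^ n)) (k : ℕ) :
    μ {ω | k < τ ω} = ENNReal.ofReal ((1 - p) ^ k) := by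
  have hunion : {ω | k < τ ω} = ⋃ m : ℕ, {ω | τ ω = k + m + 1} := by
    ext ω
    simp only [Set.mem_iUnion, Set.mem_ofPred_eq]
    exact ⟨fun h => ⟨τ ω - k - 1, by omega⟩, fun ⟨m, hm⟩ => by omega⟩
  have hdisj : Pairwise (Function.onFun Disjoint fun m : ℕ => {ω | τ ω = k + m + 1}) :=
    fun i j hij => Set.disjoint_left.2 fun ω hi hj => hij (by simp_all)
  have hsum : HasSum (fun m : ℕ => p * (1 - p) ^ (k + m)) ((1 - p) ^ k) := by
    have h := (hasSum_geometric_of_lt_one (by linarith) (by linarith : 1 - p < 1)).mul_left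
      (p * (1 - p) ^ k)
    rw [sub_sub_cancel, mul_right_comm, mul_inv_cancel₀ hp.ne', one_mul] at h
    simpa only [pow_add, mul_assoc] using h
  rw [hunion, measure_iUnion hdisj fun m => hτ (measurableSet_singleton _)]
  simp_rw [hgeom, ← hsum.tsum_eq]
  rw [ENNReal.ofReal_tsum_of_nonneg (fun m => by positivity) hsum.summable]

theorem measure_eq_zero_of_geometric [IsProbabilityMeasure μ] (hτ : Measurable τ) (hp : 0 < p)
    (hp1 : p < 1) (hgeom : ∀ n : ℕ, μ {ω | τ ω = n + 1} = ENNReal.ofReal (p * (1 - p) ^ n)) :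
    μ {ω | τ ω = 0} = 0 := by
  have hcompl : {ω | τ ω = 0} = {ω | 0 < τ ω}ᶜ := by ext ω; simp
  rw [hcompl, prob_compl_eq_one_sub (measurableSet_lt measurable_const hτ),
    measure_lt_of_geometric hτ hp hp1 hgeom, pow_zero, ENNReal.ofReal_one, tsub_self]

theorem measure_eq_add_of_geometric (hτ : Measurable τ) (hp : 0 < p) (hp1 : p < 1)
    (hgeom : ∀ n : ℕ, μ {ω | τ ω = n + 1} = ENNReal.ofReal (p * (1 - p) ^ n)) (k m : ℕ) :
    μ {ω | τ ω = k + m + 1} = μ {ω | k < τ ω} * μ {ω | τ ω = m + 1} := by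
  rw [hgeom, measure_lt_of_geometric hτ hp hp1 hgeom, hgeom,
    ← ENNReal.ofReal_mul (pow_nonneg (by linarith) _)]
  congr 1
  ring

end GeometricTime

theorem ProbabilityTheory.iIndepFun.identDistrib_comp_of_injective {Ω ι κ β : Type*}
    [MeasurableSpace Ω] {μ : Measure Ω} [IsProbabilityMeasure μ] [Fintype ι] [MeasurableSpace β]
    {X : κ → Ω → β}
    (hX : ∀ i, Measurable (X i)) (hindep : iIndepFun X μ)
    (hident : ∀ i j, IdentDistrib (X i) (X j) μ μ) {e e' : ι → κ}
    (he : e.Injective) (he' : e'.Injective) :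
    IdentDistrib (fun ω i => X (e i) ω) (fun ω i => X (e' i) ω) μ μ where
  aemeasurable_fst := (measurable_pi_lambda _ fun i => hX (e i)).aemeasurable
  aemeasurable_snd := (measurable_pi_lambda _ fun i => hX (e' i)).aemeasurable
  map_eq := by
    rw [(hindep.precomp he).map_fun_eq_pi_map fun i => (hX _).aemeasurable,
      (hindep.precomp he').map_fun_eq_pi_map fun i => (hX _).aemeasurable]
    congr 1
    funext i
    exact (hident (e i) (e' i)).map_eq

theorem measurable_iSup_comap_of_mem {Ω ι β : Type*} [MeasurableSpace β] {X : ι → Ω → β}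
    {s : Set ι} {i : ι} (hi : i ∈ s) :
    Measurable[⨆ j ∈ s, MeasurableSpace.comap (X j) inferInstance] (X i) :=
  Measurable.of_comap_le (le_iSup₂ (f := fun j (_ : j ∈ s) => MeasurableSpace.comap (X j) _) i hi)

def firstPassage {Ω : Type*} (S : ℕ → Ω → ℝ) (u : ℝ) (k : ℕ) : Set Ω :=
  {ω | u < S k ω ∧ ∀ j < k, S j ω ≤ u}

def partialSum {Ω : Type*} (X : ℕ → Ω → ℝ) (n : ℕ) (ω : Ω) : ℝ :=
  ∑ i ∈ range n, X i ω

section FirstPassage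

variable {Ω : Type*} {S : ℕ → Ω → ℝ} {u : ℝ}

theorem pairwise_disjoint_firstPassage : Pairwise (Disjoint on firstPassage S u) := by
  refine pairwise_disjoint_on _ |>.2 fun k l hkl => Set.disjoint_left.2 ?_
  rintro ω ⟨hk, -⟩ ⟨-, hl⟩
  exact (hl k hkl).not_gt hk

theorem setOf_exists_lt_gt_eq_iUnion_firstPassage (τ : Ω → ℕ) :
    {ω | ∃ k < τ ω, S k ω > u} = ⋃ k, firstPassage S u k ∩ {ω | k < τ ω} := by
  ext ω
  simp only [Set.mem_iUnion, Set.mem_inter_iff, firstPassage, Set.mem_ofPred_eq]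
  constructor
  · rintro ⟨k, hkτ, hk⟩
    have hex : ∃ n, u < S n ω := ⟨k, hk⟩
    exact ⟨Nat.find hex, ⟨Nat.find_spec hex, fun j hj => not_lt.1 (Nat.find_min hex hj)⟩,
      (Nat.find_min' hex hk).trans_lt hkτ⟩
  · rintro ⟨k, ⟨hk, -⟩, hkτ⟩
    exact ⟨k, hkτ, hk⟩

theorem measurableSet_firstPassage {m : MeasurableSpace Ω} {k : ℕ}
    (hS : ∀ j ≤ k, Measurable[m] (S j)) : MeasurableSet[m] (firstPassage S u k) := by
  have hpast : firstPassage S u k = {ω | u < S k ω} ∩ ⋂ j ∈ Set.Iio k, {ω | S j ω ≤ u} := by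
    ext ω; simp [firstPassage]
  rw [hpast]
  exact (measurableSet_lt measurable_const (hS k le_rfl)).inter <|
    .biInter (Set.to_countable _) fun j hj => measurableSet_le (hS j (le_of_lt hj)) measurable_const

end FirstPassage

section RandomWalk

variable {Ω : Type*} {X : ℕ → Ω → ℝ}

theorem partialSum_sub_partialSum {k n : ℕ} (hkn : k ≤ n) (ω : Ω) :
    partialSum X n ω - partialSum X k ω = ∑ i ∈ Ico k n, X i ω :=
  (sum_Ico_eq_sub _ hkn).symm

theorem measurable_partialSum {m : MeasurableSpace Ω} {n : ℕ}
    (hX : ∀ i < n, Measurable[m] (X i)) : Measurable[m] (partialSum X n) :=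
  Finset.measurable_sum _ fun i hi => hX i (mem_range.1 hi)

variable [MeasurableSpace Ω] {μ : Measure Ω} [IsProbabilityMeasure μ]

theorem identDistrib_partialSum_sub (hX : ∀ i, Measurable (X i)) (hindep : iIndepFun X μ)
    (hident : ∀ i, IdentDistrib (X i) (X 0) μ μ) {k n : ℕ}
    (hkn : k ≤ n) :
    IdentDistrib (fun ω => partialSum X n ω - partialSum X k ω) (partialSum X (n - k)) μ μ := by
  have hshift := (hindep.identDistrib_comp_of_injective hX
    (fun i j => (hident i).trans (hident j).symm) (e := fun j : Fin (n - k) => k + j)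
    (e' := fun j : Fin (n - k) => (j : ℕ)) (fun i j h => Fin.ext (by simpa using h))
    Fin.val_injective).comp (measurable_sum univ fun j _ => measurable_pi_apply j)
  convert hshift using 1 <;> funext ω
  · simp [partialSum_sub_partialSum hkn, sum_Ico_eq_sum_range, Fin.sum_univ_eq_sum_range
      (fun j => X (k + j) ω)]
  · simp [partialSum, Fin.sum_univ_eq_sum_range (fun j => X j ω)]

theorem measure_firstPassage_inter_eq_mul (hX : ∀ i, Measurable (X i)) (hindep : iIndepFun X μ)
    (hident : ∀ i, IdentDistrib (X i) (X 0) μ μ)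
    {k n : ℕ} (hkn : k ≤ n) (u c : ℝ) :
    μ (firstPassage (partialSum X) u k ∩ {ω | c ≤ partialSum X n ω - partialSum X k ω}) =
      μ (firstPassage (partialSum X) u k) * μ {ω | c ≤ partialSum X (n - k) ω} := by
  have hind := indep_iSup_of_disjoint (fun i => (hX i).comap_le) hindep
    (Set.Iio_disjoint_Ici (le_refl k))
  have hpast : MeasurableSet[⨆ i ∈ Set.Iio k, MeasurableSpace.comap (X i) inferInstance]
      (firstPassage (partialSum X) u k) :=
    measurableSet_firstPassage fun j hj =>
      measurable_partialSum fun i hi => measurable_iSup_comap_of_mem (Set.mem_Iio.2 (by omega))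
  have hfuture : Measurable[⨆ i ∈ Set.Ici k, MeasurableSpace.comap (X i) inferInstance]
      fun ω => partialSum X n ω - partialSum X k ω := by
    simp_rw [partialSum_sub_partialSum hkn]
    exact Finset.measurable_sum _ fun i hi => measurable_iSup_comap_of_mem (mem_Ico.1 hi).1
  rw [(Indep_iff _ _ μ).1 hind _ _ hpast (measurableSet_le measurable_const hfuture)]
  exact congrArg (_ * ·)
    ((identDistrib_partialSum_sub hX hindep hident hkn).measure_mem_eq measurableSet_Ici)

theorem sum_measure_firstPassage_mul_le (hX : ∀ i, Measurable (X i)) (hindep : iIndepFun X μ)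
    (hident : ∀ i, IdentDistrib (X i) (X 0) μ μ)
    (u v : ℝ) (n : ℕ) :
    ∑ k ∈ range n, μ (firstPassage (partialSum X) u k) * μ {ω | -v ≤ partialSum X (n - k) ω} ≤
      μ {ω | u - v ≤ partialSum X n ω} := by
  set F : ℕ → Set Ω := fun k =>
    firstPassage (partialSum X) u k ∩ {ω | -v ≤ partialSum X n ω - partialSum X k ω}
  have hmeas (m : ℕ) : Measurable (partialSum X m) := measurable_partialSum fun i _ => hX i
  calc _ = ∑ k ∈ range n, μ (F k) := sum_congr rfl fun k hk =>
          (measure_firstPassage_inter_eq_mul hX hindep hident (mem_range.1 hk).le u (-v)).symm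
    _ = μ (⋃ k ∈ range n, F k) := by
      refine (measure_biUnion_finset (fun k _ l _ hkl => ?_) fun k _ => ?_).symm
      · exact (pairwise_disjoint_firstPassage hkl).mono Set.inter_subset_left
          Set.inter_subset_left
      · exact (measurableSet_firstPassage fun j _ => hmeas j).inter
          (measurableSet_le measurable_const ((hmeas n).sub (hmeas k)))
    _ ≤ μ {ω | u - v ≤ partialSum X n ω} := by
      refine measure_mono (Set.iUnion₂_subset fun k _ ω ⟨⟨hu, _⟩, hv⟩ => ?_)
      simp only [Set.mem_ofPred_eq] at hv ⊢
      linarith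

end RandomWalk

section IndependentTime

variable {Ω β : Type*} [MeasurableSpace Ω] {μ : Measure Ω} [MeasurableSpace β] {Y : Ω → β}

theorem ProbabilityTheory.IndepFun.measure_setOf_mem_eq_tsum {ι : Type*} [MeasurableSpace ι]
    [MeasurableSingletonClass ι] [Countable ι] {τ : Ω → ι} (hτ : Measurable τ)
    (hY : Measurable Y) (hτY : IndepFun τ Y μ) {C : ι → Set Ω}
    (hC : ∀ i, MeasurableSet[MeasurableSpace.comap Y inferInstance] (C i)) :
    μ {ω | ω ∈ C (τ ω)} = ∑' i, μ {ω | τ ω = i} * μ (C i) := by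
  have hunion : {ω | ω ∈ C (τ ω)} = ⋃ i, {ω | τ ω = i} ∩ C i := by ext ω; simp
  have hdisj : Pairwise (Disjoint on fun i => {ω | τ ω = i} ∩ C i) := fun i j hij =>
    Set.disjoint_left.2 fun ω hi hj => hij (hi.1.symm.trans hj.1)
  rw [hunion, measure_iUnion hdisj fun i =>
    (hτ (measurableSet_singleton i)).inter (hY.comap_le _ (hC i))]
  exact tsum_congr fun i => hτY.meas_inter ⟨{i}, measurableSet_singleton i, rfl⟩ (hC i)

theorem ProbabilityTheory.IndepFun.measure_exists_lt_gt_eq_tsum {τ : Ω → ℕ} (hτ : Measurable τ)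
    (hY : Measurable Y) (hτY : IndepFun τ Y μ) {S : ℕ → Ω → ℝ}
    (hS : ∀ j, Measurable[MeasurableSpace.comap Y inferInstance] (S j)) (u : ℝ) :
    μ {ω | ∃ k < τ ω, S k ω > u} = ∑' k, μ (firstPassage S u k) * μ {ω | k < τ ω} := by
  have hpassage (k : ℕ) := measurableSet_firstPassage (u := u) (k := k) fun j _ => hS j
  rw [setOf_exists_lt_gt_eq_iUnion_firstPassage, measure_iUnion
    (fun k l hkl => (pairwise_disjoint_firstPassage hkl).mono Set.inter_subset_left
      Set.inter_subset_left)
    fun k => (hY.comap_le _ (hpassage k)).inter (measurableSet_lt measurable_const hτ)]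
  refine tsum_congr fun k => ?_
  rw [Set.inter_comm, mul_comm]
  exact hτY.meas_inter ⟨Set.Ioi k, measurableSet_Ioi, rfl⟩ (hpassage k)

end IndependentTime

theorem geometric_time_maximum_tail_bound_general
    {Ω : Type*} [MeasurableSpace Ω] (μ : Measure Ω) [IsProbabilityMeasure μ]
    (X : ℕ → Ω → ℝ) (hX : ∀ k, Measurable (X k))
    (hindep : iIndepFun X μ)
    (hident : ∀ k, IdentDistrib (X k) (X 0) μ μ)
    (τ : Ω → ℕ) (hτ : Measurable τ)
    (p : ℝ) (hp : 0 < p) (hp1 : p < 1)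
    (hgeom : ∀ n : ℕ, μ {ω | τ ω = n + 1} = ENNReal.ofReal (p * (1 - p) ^ n))
    (hτindep : IndepFun τ (fun ω (k : ℕ) => X k ω) μ)
    (S : ℕ → Ω → ℝ) (hS : ∀ n ω, S n ω = ∑ k ∈ Finset.range n, X k ω)
    (u u₀ : ℝ) :
    μ {ω | ∃ k < τ ω, S k ω > u} * μ {ω | S (τ ω) ω ≥ -u₀} ≤
      μ {ω | S (τ ω) ω ≥ u - u₀} ∧
    (0 < μ {ω | S (τ ω) ω ≥ -u₀} →
      (μ {ω | ∃ k < τ ω, S k ω > u}).toReal ≤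
        (μ {ω | S (τ ω) ω ≥ u - u₀}).toReal / (μ {ω | S (τ ω) ω ≥ -u₀}).toReal) := by
  obtain rfl : S = partialSum X := funext₂ hS
  have hY : Measurable fun ω (k : ℕ) => X k ω := measurable_pi_lambda _ hX
  have hSY (n : ℕ) :
      Measurable[MeasurableSpace.comap (fun ω (k : ℕ) => X k ω) inferInstance] (partialSum X n) :=
    measurable_partialSum fun i _ =>
      (measurable_pi_apply i).comp (comap_measurable fun ω (k : ℕ) => X k ω)
  have hlevel (c : ℝ) (n : ℕ) := measurableSet_le (measurable_const (a := c)) (hSY n)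
  have hmain : μ {ω | ∃ k < τ ω, partialSum X k ω > u} * μ {ω | partialSum X (τ ω) ω ≥ -u₀} ≤
      μ {ω | partialSum X (τ ω) ω ≥ u - u₀} := calc
    _ = (∑' k, μ (firstPassage (partialSum X) u k) * μ {ω | k < τ ω}) *
          ∑' n, μ {ω | τ ω = n} * μ {ω | -u₀ ≤ partialSum X n ω} := by
      rw [hτindep.measure_exists_lt_gt_eq_tsum hτ hY hSY,
        ← hτindep.measure_setOf_mem_eq_tsum hτ hY (hlevel (-u₀))]
      rfl
    _ = ∑' n, μ {ω | τ ω = n} * ∑ k ∈ range n,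
          μ (firstPassage (partialSum X) u k) * μ {ω | -u₀ ≤ partialSum X (n - k) ω} :=
      ENNReal.tsum_mul_tsum_eq_tsum_mul_sum_range (measure_eq_zero_of_geometric hτ hp hp1 hgeom)
        (measure_eq_add_of_geometric hτ hp hp1 hgeom)
    _ ≤ ∑' n, μ {ω | τ ω = n} * μ {ω | u - u₀ ≤ partialSum X n ω} :=
      ENNReal.tsum_le_tsum fun n => by
        gcongr
        exact sum_measure_firstPassage_mul_le hX hindep hident u u₀ n
    _ = _ := (hτindep.measure_setOf_mem_eq_tsum hτ hY (hlevel (u - u₀))).symm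
  refine ⟨hmain, fun hpos => ?_⟩
  rw [le_div_iff₀ (ENNReal.toReal_pos hpos.ne' (measure_ne_top μ _)), ← ENNReal.toReal_mul]
  exact ENNReal.toReal_mono (measure_ne_top μ _) hmain

/-- **Discrete-time form of Lemma 4.1 (Willekens-type bound).** For an i.i.d.
random walk `S` and an independent geometric time `τ` (with `P(τ = n) =
p(1-p)^(n-1)` for `n ≥ 1`), and `0 < u₀ < u`:
`P(max_{0 ≤ k < τ} S_k > u) · P(S_τ ≥ -u₀) ≤ P(S_τ ≥ u - u₀)`; in particular if
`P(S_τ ≥ -u₀) > 0` then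
`P(max_{0 ≤ k < τ} S_k > u) ≤ P(S_τ ≥ u - u₀) / P(S_τ ≥ -u₀)`. -/
theorem geometric_time_maximum_tail_bound
    {Ω : Type*} [MeasurableSpace Ω] (μ : Measure Ω) [IsProbabilityMeasure μ]
    (X : ℕ → Ω → ℝ) (hX : ∀ k, Measurable (X k))
    (hindep : iIndepFun X μ)
    (hident : ∀ k, IdentDistrib (X k) (X 0) μ μ)
    (τ : Ω → ℕ) (hτ : Measurable τ)
    (p : ℝ) (hp : 0 < p) (hp1 : p < 1)
    (hgeom : ∀ n : ℕ, μ {ω | τ ω = n + 1} = ENNReal.ofReal (p * (1 - p) ^ n))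
    (hτindep : IndepFun τ (fun ω (k : ℕ) => X k ω) μ)
    (S : ℕ → Ω → ℝ) (hS : ∀ n ω, S n ω = ∑ k ∈ Finset.range n, X k ω)
    (u u₀ : ℝ) (h0 : 0 < u₀) (hu : u₀ < u) :
    μ {ω | ∃ k < τ ω, S k ω > u} * μ {ω | S (τ ω) ω ≥ -u₀} ≤
      μ {ω | S (τ ω) ω ≥ u - u₀} ∧
    (0 < μ {ω | S (τ ω) ω ≥ -u₀} →
      (μ {ω | ∃ k < τ ω, S k ω > u}).toReal ≤
        (μ {ω | S (τ ω) ω ≥ u - u₀}).toReal / (μ {ω | S (τ ω) ω ≥ -u₀}).toReal) :=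
  geometric_time_maximum_tail_bound_general μ X hX hindep hident τ hτ p hp hp1 hgeom hτindep S hS u
    u₀
end

section
/- Let N be a natural number, let C be a real number with e^C > 2, and let x₁, …, x_N be real numbers. Define b_N := e^C and, recursively for k = N−1, N−2, …, 0, b_k := e^C + e^{x_{k+1}} b_{k+1}. Then log(b₀) ≤ (N+1)·C + Σ_{i=1}^N max(x_i, 0). -/
private lemma log_add_le_aux {A B : ℝ} (hA : 2 < A) (hB : 2 < B) :
    Real.log (A + B) ≤ Real.log A + Real.log B := by
  rw [← Real.log_mul (by linarith) (by linarith)]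
  exact Real.log_le_log (by linarith) (by nlinarith)

/-- **Deterministic core of Lemma 4.4 (logAsum).** With `e^C > 2`,
`b_N = e^C` and `b_k = e^C + e^{x_{k+1}} b_{k+1}` for `k < N`, one has
`log b₀ ≤ (N+1)·C + ∑_{i=1}^N max(x_i, 0)`. -/
theorem nested_log_bound (N : ℕ) (C : ℝ) (hC : 2 < Real.exp C)
    (x : ℕ → ℝ) (b : ℕ → ℝ) (hbN : b N = Real.exp C)
    (hb : ∀ k < N, b k = Real.exp C + Real.exp (x (k + 1)) * b (k + 1)) :
    Real.log (b 0) ≤ (N + 1 : ℝ) * C + ∑ i ∈ Finset.Icc 1 N, max (x i) 0 := by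
  have aux : ∀ d k, k + d = N →
      2 < b k ∧ Real.log (b k) ≤ (d + 1 : ℝ) * C +
        ∑ i ∈ Finset.Icc (k + 1) N, max (x i) 0 := by
    intro d
    induction d with
    | zero =>
      intro k hk
      simp only [Nat.add_zero] at hk
      subst hk
      constructor
      · rwa [hbN]
      · rw [hbN, Real.log_exp, Finset.Icc_eq_empty (by omega), Finset.sum_empty]
        push_cast; linarith
    | succ d ih =>
      intro k hk
      obtain ⟨hpos, hlog⟩ := ih (k + 1) (by omega)
      have hbk := hb k (by omega)
      have hexp : (0 : ℝ) < Real.exp (x (k + 1)) := Real.exp_pos _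
      constructor
      · rw [hbk]; nlinarith
      · set m := max (x (k + 1)) 0 with hm
        have h1 : b k ≤ Real.exp C + Real.exp m * b (k + 1) := by
          rw [hbk]
          have : Real.exp (x (k + 1)) ≤ Real.exp m :=
            Real.exp_le_exp.mpr (le_max_left _ _)
          nlinarith
        have h2 : 2 < Real.exp m * b (k + 1) := by
          have : (1 : ℝ) ≤ Real.exp m := Real.one_le_exp (le_max_right _ _)
          nlinarith
        calc Real.log (b k) ≤ Real.log (Real.exp C + Real.exp m * b (k + 1)) :=
              Real.log_le_log (by nlinarith [hbk]) h1
          _ ≤ Real.log (Real.exp C) + Real.log (Real.exp m * b (k + 1)) :=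
              log_add_le_aux hC h2
          _ = C + (m + Real.log (b (k + 1))) := by
              rw [Real.log_exp, Real.log_mul (by positivity) (by linarith),
                Real.log_exp]
          _ ≤ C + (m + ((d + 1 : ℝ) * C +
              ∑ i ∈ Finset.Icc (k + 2) N, max (x i) 0)) := by linarith
          _ = (d + 1 + 1 : ℝ) * C +
              (m + ∑ i ∈ Finset.Icc (k + 2) N, max (x i) 0) := by ring
          _ = (d + 1 + 1 : ℝ) * C + ∑ i ∈ Finset.Icc (k + 1) N, max (x i) 0 := by
              congr 1
              rw [show Finset.Icc (k + 1) N = insert (k + 1) (Finset.Icc (k + 2) N) by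
                ext i; simp [Finset.mem_Icc]; omega]
              rw [Finset.sum_insert (by simp)]
        push_cast
        linarith
  have := (aux N 0 (by omega)).2
  push_cast at this ⊢
  convert this using 2
end

section
/- Let η₁₁, η₁₂, η₂₁, η₂₂ be nonnegative real numbers with η₁₁ + η₁₂ < 1 and η₂₁ + η₂₂ < 1, and let p₀, q₀ ∈ {0,1} with p₀ + q₀ = 1. Define sequences (p_n)_{n≥0} and (q_n)_{n≥0} by the recurrences p_n = η₁₁ p_{n−1} + η₂₁ q_{n−1} and q_n = η₂₂ q_{n−1} + η₁₂ p_{n−1} for n ≥ 1. Then (1−η₁₁)(1−η₂₂) − η₂₁η₁₂ > 0, the series Σ_{n=1}^∞ p_n converges, and Σ_{n=1}^∞ p_n = [ p₀·(η₁₁(1−η₂₂) + η₂₁η₁₂) + q₀·η₂₁ ] / [ (1−η₁₁)(1−η₂₂) − η₂₁η₁₂ ]. -/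
/-- **Computational core of Proposition 4.5 (markovChainK).** For a substochastic
two-state system with transition weights `η` and initial data `(p₀, q₀)` a unit
vector, the recursively defined occupation probabilities `p_n` form a summable
series whose sum has the stated closed form, and the determinant
`(1-η₁₁)(1-η₂₂) - η₂₁η₁₂` is positive. -/
theorem absorbing_chain_series (η₁₁ η₁₂ η₂₁ η₂₂ : ℝ)
    (h11 : 0 ≤ η₁₁) (h12 : 0 ≤ η₁₂) (h21 : 0 ≤ η₂₁) (h22 : 0 ≤ η₂₂)
    (hrow1 : η₁₁ + η₁₂ < 1) (hrow2 : η₂₁ + η₂₂ < 1)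
    (p q : ℕ → ℝ)
    (hinit : (p 0 = 1 ∧ q 0 = 0) ∨ (p 0 = 0 ∧ q 0 = 1))
    (hp : ∀ n : ℕ, p (n + 1) = η₁₁ * p n + η₂₁ * q n)
    (hq : ∀ n : ℕ, q (n + 1) = η₂₂ * q n + η₁₂ * p n) :
    0 < (1 - η₁₁) * (1 - η₂₂) - η₂₁ * η₁₂ ∧
    Summable (fun n : ℕ => p (n + 1)) ∧
    ∑' n : ℕ, p (n + 1) =
      (p 0 * (η₁₁ * (1 - η₂₂) + η₂₁ * η₁₂) + q 0 * η₂₁) /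
        ((1 - η₁₁) * (1 - η₂₂) - η₂₁ * η₁₂) := by
  have hDpos : 0 < (1 - η₁₁) * (1 - η₂₂) - η₂₁ * η₁₂ := by nlinarith
  set r : ℝ := max (η₁₁ + η₁₂) (η₂₁ + η₂₂) with hr
  have hr0 : 0 ≤ r := le_trans (by linarith) (le_max_left _ _)
  have hr1 : r < 1 := max_lt hrow1 hrow2
  -- nonnegativity and bound
  have key : ∀ n, 0 ≤ p n ∧ 0 ≤ q n ∧ p n + q n ≤ r ^ n := by
    intro n
    induction n with
    | zero =>
      rcases hinit with ⟨h1, h2⟩ | ⟨h1, h2⟩ <;> simp [h1, h2]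
    | succ n ih =>
      obtain ⟨hpn, hqn, hs⟩ := ih
      refine ⟨by rw [hp]; positivity, by rw [hq]; positivity, ?_⟩
      rw [hp, hq, pow_succ]
      have h1 : η₁₁ + η₁₂ ≤ r := le_max_left _ _
      have h2 : η₂₁ + η₂₂ ≤ r := le_max_right _ _
      have : η₁₁ * p n + η₂₁ * q n + (η₂₂ * q n + η₁₂ * p n)
          ≤ r * p n + r * q n := by nlinarith
      calc η₁₁ * p n + η₂₁ * q n + (η₂₂ * q n + η₁₂ * p n)
          ≤ r * (p n + q n) := by linarith
        _ ≤ r * r ^ n := by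
            exact mul_le_mul_of_nonneg_left hs hr0
        _ = r ^ n * r := by ring
  have hpnonneg : ∀ n, 0 ≤ p n := fun n => (key n).1
  have hqnonneg : ∀ n, 0 ≤ q n := fun n => (key n).2.1
  have hpbound : ∀ n, p n ≤ r ^ n := fun n => by
    have := (key n).2.2; have := hqnonneg n; linarith
  have hqbound : ∀ n, q n ≤ r ^ n := fun n => by
    have := (key n).2.2; have := hpnonneg n; linarith
  have hgeo : Summable (fun n : ℕ => r ^ n) :=
    summable_geometric_of_lt_one hr0 hr1
  have hP : Summable p := hgeo.of_nonneg_of_le hpnonneg hpbound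
  have hQ : Summable q := hgeo.of_nonneg_of_le hqnonneg hqbound
  have hP1 : Summable (fun n : ℕ => p (n + 1)) := by
    exact (summable_nat_add_iff 1).mpr hP
  have hQ1 : Summable (fun n : ℕ => q (n + 1)) := by
    exact (summable_nat_add_iff 1).mpr hQ
  refine ⟨hDpos, hP1, ?_⟩
  set P := ∑' n : ℕ, p (n + 1) with hPdef
  set Q := ∑' n : ℕ, q (n + 1) with hQdef
  have hsplitP : ∑' n : ℕ, p n = p 0 + P := by
    rw [hPdef]; exact Summable.tsum_eq_zero_add hP
  have hsplitQ : ∑' n : ℕ, q n = q 0 + Q := by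
    rw [hQdef]; exact Summable.tsum_eq_zero_add hQ
  have eq1 : P = η₁₁ * (p 0 + P) + η₂₁ * (q 0 + Q) := by
    rw [← hsplitP, ← hsplitQ, hPdef]
    calc ∑' n : ℕ, p (n + 1) = ∑' n : ℕ, (η₁₁ * p n + η₂₁ * q n) := by
          exact tsum_congr fun n => hp n
      _ = η₁₁ * ∑' n, p n + η₂₁ * ∑' n, q n := by
          rw [Summable.tsum_add (hP.mul_left _) (hQ.mul_left _), tsum_mul_left, tsum_mul_left]
  have eq2 : Q = η₂₂ * (q 0 + Q) + η₁₂ * (p 0 + P) := by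
    rw [← hsplitP, ← hsplitQ, hQdef]
    calc ∑' n : ℕ, q (n + 1) = ∑' n : ℕ, (η₂₂ * q n + η₁₂ * p n) := by
          exact tsum_congr fun n => hq n
      _ = η₂₂ * ∑' n, q n + η₁₂ * ∑' n, p n := by
          rw [Summable.tsum_add (hQ.mul_left _) (hP.mul_left _), tsum_mul_left, tsum_mul_left]
  rw [eq_div_iff (ne_of_gt hDpos)]
  linear_combination (1 - η₂₂) * eq1 + η₂₁ * eq2
end
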